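/- arXiv:0704.0125 — 2 statements merged into one kernel-verified Lean document; each statement's English description precedes it below -/
import Mathlib

section
/- For the rhombic medium symbol A(η) = [[(τ₁−μ)η₁²+μ, (λ+μ)η₁η₂],[(λ+μ)η₁η₂, (τ₂−μ)η₂²+μ]] with τ₁, τ₂, μ > 0 and −2μ−√(τ₁τ₂) < λ < √(τ₁τ₂), the matrix A(η) is positive definite for every η ∈ S¹. -/
/-!
Write `τ₁ = s²`, `τ₂ = t²` with `s, t > 0`. On the unit circle the diagonal entry
`(τ₁ - μ) η₁² + μ` equals `τ₁ η₁² + μ η₂² > 0`, and the determinant is the sum of squares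
`(st - λ)(λ + 2μ + st) (η₁η₂)² + μ (s η₁² - t η₂²)²`, whose first coefficient is positive
exactly by the bounds on `λ`; the two squares cannot vanish together on the circle.
Positivity of a diagonal entry and of the determinant characterises positive definite
symmetric `2 × 2` matrices.
-/

open Matrix

theorem Matrix.posDef_fin_two_of_pos_of_det_pos {a b c : ℝ} (ha : 0 < a)
    (hdet : 0 < a * c - b ^ 2) : (!![a, b; b, c] : Matrix (Fin 2) (Fin 2) ℝ).PosDef := by
  refine posDef_iff_dotProduct_mulVec.mpr ⟨?_, fun x hx => ?_⟩
  · ext i j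
    fin_cases i <;> fin_cases j <;> rfl
  have hform : star x ⬝ᵥ !![a, b; b, c] *ᵥ x
      = a * x 0 ^ 2 + 2 * b * x 0 * x 1 + c * x 1 ^ 2 := by
    simp only [dotProduct, mulVec, Fin.sum_univ_two, star_trivial, of_apply, cons_val',
      cons_val_zero, cons_val_one, cons_val_fin_one, empty_val']
    ring
  -- completing the square: `a · form = (a x₀ + b x₁)² + (ac - b²) x₁²`
  have hscaled : 0 < (a * x 0 + b * x 1) ^ 2 + (a * c - b ^ 2) * x 1 ^ 2 := by
    rcases eq_or_ne (x 1) 0 with h1 | h1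
    · have h0 : x 0 ≠ 0 := fun h0 => hx (funext fun i => by fin_cases i <;> assumption)
      rw [h1]
      simpa using sq_pos_of_ne_zero (mul_ne_zero ha.ne' h0)
    · exact add_pos_of_nonneg_of_pos (sq_nonneg _) (mul_pos hdet (by positivity))
  rw [hform]
  refine pos_of_mul_pos_right (a := a) ?_ ha.le
  linear_combination hscaled

theorem rhombic_symbol_det_eq (s t μ lam η₁ η₂ : ℝ) (hη : η₁ ^ 2 + η₂ ^ 2 = 1) :
    ((s ^ 2 - μ) * η₁ ^ 2 + μ) * ((t ^ 2 - μ) * η₂ ^ 2 + μ) - ((lam + μ) * η₁ * η₂) ^ 2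
      = (s * t - lam) * (lam + 2 * μ + s * t) * (η₁ * η₂) ^ 2
        + μ * (s * η₁ ^ 2 - t * η₂ ^ 2) ^ 2 := by
  linear_combination
    (-(μ * ((s ^ 2 + μ) * η₁ ^ 2 + (t ^ 2 + μ) * η₂ ^ 2)) + μ ^ 2 * (η₁ ^ 2 + η₂ ^ 2 - 1)) * hη

theorem mul_sq_add_mul_sq_pos_of_sq_add_sq_eq_one {a b x y : ℝ} (ha : 0 < a) (hb : 0 < b)
    (hxy : x ^ 2 + y ^ 2 = 1) : 0 < a * x ^ 2 + b * y ^ 2 := by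
  rcases eq_or_ne x 0 with hx | hx
  · have hy : y ^ 2 = 1 := by simpa [hx] using hxy
    simpa [hx, hy] using hb
  · exact add_pos_of_pos_of_nonneg (by positivity) (by positivity)

theorem mul_sq_mul_add_mul_sq_sub_pos_of_sq_add_sq_eq_one {p μ s t η₁ η₂ : ℝ} (hp : 0 < p)
    (hμ : 0 < μ) (hs : 0 < s) (ht : 0 < t) (hη : η₁ ^ 2 + η₂ ^ 2 = 1) :
    0 < p * (η₁ * η₂) ^ 2 + μ * (s * η₁ ^ 2 - t * η₂ ^ 2) ^ 2 := by
  rcases eq_or_ne (η₁ * η₂) 0 with h | h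
  · have hne : s * η₁ ^ 2 - t * η₂ ^ 2 ≠ 0 := by
      rcases mul_eq_zero.mp h with h0 | h0 <;> rw [h0] at hη ⊢ <;> nlinarith
    rw [h]
    positivity
  · exact add_pos_of_pos_of_nonneg (by positivity) (by positivity)

/-- The rhombic medium symbol `A(η)` is positive definite for every `η ∈ S¹`. -/
theorem rhombic_symbol_posDef
    (τ₁ τ₂ μ lam : ℝ) (hτ₁ : 0 < τ₁) (hτ₂ : 0 < τ₂) (hμ : 0 < μ)
    (hlaml : -2 * μ - Real.sqrt (τ₁ * τ₂) < lam) (hlamu : lam < Real.sqrt (τ₁ * τ₂))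
    (η₁ η₂ : ℝ) (hη : η₁ ^ 2 + η₂ ^ 2 = 1) :
    (!![(τ₁ - μ) * η₁ ^ 2 + μ, (lam + μ) * η₁ * η₂;
        (lam + μ) * η₁ * η₂, (τ₂ - μ) * η₂ ^ 2 + μ] : Matrix (Fin 2) (Fin 2) ℝ).PosDef := by
  obtain ⟨s, hs, rfl⟩ : ∃ s, 0 < s ∧ s ^ 2 = τ₁ :=
    ⟨_, Real.sqrt_pos.2 hτ₁, Real.sq_sqrt hτ₁.le⟩
  obtain ⟨t, ht, rfl⟩ : ∃ t, 0 < t ∧ t ^ 2 = τ₂ :=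
    ⟨_, Real.sqrt_pos.2 hτ₂, Real.sq_sqrt hτ₂.le⟩
  rw [← mul_pow, Real.sqrt_sq (by positivity)] at hlaml hlamu
  apply posDef_fin_two_of_pos_of_det_pos
  · have hdiag : (s ^ 2 - μ) * η₁ ^ 2 + μ = s ^ 2 * η₁ ^ 2 + μ * η₂ ^ 2 := by
      linear_combination (-μ) * hη
    rw [hdiag]
    exact mul_sq_add_mul_sq_pos_of_sq_add_sq_eq_one (by positivity) hμ hη
  · rw [rhombic_symbol_det_eq s t μ lam η₁ η₂ hη]
    exact mul_sq_mul_add_mul_sq_sub_pos_of_sq_add_sq_eq_one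
      (mul_pos (by linarith) (by linarith)) hμ hs ht hη
end

section
/- In a degenerate direction where κ₁(η) = κ₂(η) = κ* > 0, the nonzero eigenvalues of the first-order symbol B₁(η) are exactly ±√κ* and ±√(κ* + γ²). -/
open Matrix Complex

/- The symbol is an arrowhead matrix: diagonal apart from its last row and column. Expanding the
determinant of `ν - B₁` along that structure and using `a₁² + a₂² = 1` factors it as
`ν (ν² - κ*) (ν² - κ* - γ²)`, whose nonzero roots are `±√κ*` and `±√(κ* + γ²)`. -/

theorem det_arrowhead_fin_five {R : Type*} [CommRing R]
    (d₁ d₂ d₃ d₄ e u₁ u₂ u₃ u₄ v₁ v₂ v₃ v₄ : R) :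
    det !![d₁, 0, 0, 0, u₁;
           0, d₂, 0, 0, u₂;
           0, 0, d₃, 0, u₃;
           0, 0, 0, d₄, u₄;
           v₁, v₂, v₃, v₄, e] =
      d₁ * d₂ * d₃ * d₄ * e - u₁ * v₁ * d₂ * d₃ * d₄ - d₁ * u₂ * v₂ * d₃ * d₄
        - d₁ * d₂ * u₃ * v₃ * d₄ - d₁ * d₂ * d₃ * u₄ * v₄ := by
  simp [det_succ_row_zero, Fin.sum_univ_succ, Fin.succAbove]
  ring

theorem det_smul_one_sub_degenerate_symbol (ν s g a₁ a₂ : ℂ) (ha : a₁ ^ 2 + a₂ ^ 2 = 1) :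
    (ν • (1 : Matrix (Fin 5) (Fin 5) ℂ) -
      !![s, 0, 0, 0, I * g * a₁;
         0, s, 0, 0, I * g * a₂;
         0, 0, -s, 0, I * g * a₁;
         0, 0, 0, -s, I * g * a₂;
         -(I * g / 2) * a₁, -(I * g / 2) * a₂, -(I * g / 2) * a₁, -(I * g / 2) * a₂, 0]).det =
      ν * (ν ^ 2 - s ^ 2) * (ν ^ 2 - s ^ 2 - g ^ 2) := by
  calc _ = det !![ν - s, 0, 0, 0, -(I * g * a₁);
                  0, ν - s, 0, 0, -(I * g * a₂);
                  0, 0, ν + s, 0, -(I * g * a₁);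
                  0, 0, 0, ν + s, -(I * g * a₂);
                  I * g / 2 * a₁, I * g / 2 * a₂, I * g / 2 * a₁, I * g / 2 * a₂, ν] := by
        congr 1
        ext i j
        fin_cases i <;> fin_cases j <;> simp [one_apply]
    _ = _ := by
        rw [det_arrowhead_fin_five]
        linear_combination g ^ 2 * ν * (ν ^ 2 - s ^ 2) * (I ^ 2 * ha + I_sq)

theorem degenerate_direction_eigenvalues_general
    (κstar γ a₁ a₂ : ℝ) (hκ : 0 < κstar)
    (ha : a₁ ^ 2 + a₂ ^ 2 = 1)
    (B₁ : Matrix (Fin 5) (Fin 5) ℂ)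
    (hB₁ : B₁ = !![(Real.sqrt κstar : ℂ), 0, 0, 0, I * γ * a₁;
                   0, (Real.sqrt κstar : ℂ), 0, 0, I * γ * a₂;
                   0, 0, (-(Real.sqrt κstar) : ℂ), 0, I * γ * a₁;
                   0, 0, 0, (-(Real.sqrt κstar) : ℂ), I * γ * a₂;
                   -(I * γ / 2) * a₁, -(I * γ / 2) * a₂,
                   -(I * γ / 2) * a₁, -(I * γ / 2) * a₂, 0]) :
    ∀ ν : ℂ, ν ≠ 0 →
      ((ν • (1 : Matrix (Fin 5) (Fin 5) ℂ) - B₁).det = 0 ↔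
        ν = (Real.sqrt κstar : ℂ) ∨ ν = -(Real.sqrt κstar : ℂ) ∨
        ν = (Real.sqrt (κstar + γ ^ 2) : ℂ) ∨ ν = -(Real.sqrt (κstar + γ ^ 2) : ℂ)) := by
  intro ν hν
  have hs : (Real.sqrt κstar : ℂ) ^ 2 = κstar := by
    exact_mod_cast Real.sq_sqrt hκ.le
  have ht : (Real.sqrt (κstar + γ ^ 2) : ℂ) ^ 2 = κstar + γ ^ 2 := by
    exact_mod_cast Real.sq_sqrt (by positivity)
  have hfactor : ν ^ 2 - (Real.sqrt κstar : ℂ) ^ 2 - (γ : ℂ) ^ 2 =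
      ν ^ 2 - (Real.sqrt (κstar + γ ^ 2) : ℂ) ^ 2 := by
    rw [hs, ht]; ring
  subst hB₁
  rw [det_smul_one_sub_degenerate_symbol _ _ _ _ _ (by exact_mod_cast ha), hfactor]
  simp only [mul_eq_zero, hν, false_or, sub_eq_zero, sq_eq_sq_iff_eq_or_eq_neg, or_assoc]

/-- In a degenerate direction (`κ₁(η) = κ₂(η) = κ* > 0`) the nonzero eigenvalues of
the first-order symbol `B₁(η)` are exactly `±√κ*` and `±√(κ* + γ²)`. -/
theorem degenerate_direction_eigenvalues
    (κstar γ a₁ a₂ : ℝ) (hκ : 0 < κstar) (hγ : γ ≠ 0)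
    (ha : a₁ ^ 2 + a₂ ^ 2 = 1)
    (B₁ : Matrix (Fin 5) (Fin 5) ℂ)
    (hB₁ : B₁ = !![(Real.sqrt κstar : ℂ), 0, 0, 0, I * γ * a₁;
                   0, (Real.sqrt κstar : ℂ), 0, 0, I * γ * a₂;
                   0, 0, (-(Real.sqrt κstar) : ℂ), 0, I * γ * a₁;
                   0, 0, 0, (-(Real.sqrt κstar) : ℂ), I * γ * a₂;
                   -(I * γ / 2) * a₁, -(I * γ / 2) * a₂,
                   -(I * γ / 2) * a₁, -(I * γ / 2) * a₂, 0]) :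
    ∀ ν : ℂ, ν ≠ 0 →
      ((ν • (1 : Matrix (Fin 5) (Fin 5) ℂ) - B₁).det = 0 ↔
        ν = (Real.sqrt κstar : ℂ) ∨ ν = -(Real.sqrt κstar : ℂ) ∨
        ν = (Real.sqrt (κstar + γ ^ 2) : ℂ) ∨ ν = -(Real.sqrt (κstar + γ ^ 2) : ℂ)) :=
  degenerate_direction_eigenvalues_general κstar γ a₁ a₂ hκ ha B₁ hB₁
end
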